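/- Let X be a complex inner product space with inner product ⟪·|·⟫, and let x, y ∈ X with x ≠ 0 and y ≠ 0. Then the Law of Cosines, i.e. the equality of complex numbers ‖x − y‖² = ‖x‖² + ‖y‖² − 2·‖x‖·‖y‖·cos(∠(x,y)), holds if and only if ⟪x|y⟫ is a real number (equivalently, the angle ∠(x,y) is real). -/

import Mathlib

/-! Since `‖x - y‖² = ‖x‖² + ‖y‖² - 2 Re⟪x|y⟫`, the Law of Cosines amounts to
`‖x‖‖y‖ cos ∠(x,y) = Re⟪x|y⟫`. By Cauchy–Schwarz the argument `z = ⟪x|y⟫ / (‖x‖‖y‖)` of the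
complex arccosine lies in the closed unit disc, where `carccos` is a right inverse of `cos`; hence
`‖x‖‖y‖ cos ∠(x,y) = ⟪x|y⟫`, and the condition reads `⟪x|y⟫ = Re⟪x|y⟫`.

That `sin (carcsin z) = z` for `z = r + is` comes from `sin (a + ib) = sin a cosh b + i cos a sinh b`:
the half-angle formulas turn the two parts into `sgn r · √((1 - G₋)/2) · √((G₊ + 1)/2)` and
`sgn s · √((1 + G₋)/2) · √((G₊ - 1)/2)`, and `(1 - G₋)(G₊ + 1) = 4r²`, `(1 + G₋)(G₊ - 1) = 4s²`. -/

/-- The real area hyperbolic cosine, `arcosh x = log (x + √(x² − 1))`. -/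
noncomputable def arcosh (x : ℝ) : ℝ := Real.log (x + Real.sqrt (x ^ 2 - 1))

/-- `G₋ = √((r²+s²−1)² + 4s²) − (r²+s²)` for `z = r + i·s`. -/
noncomputable def Gminus (z : ℂ) : ℝ :=
  Real.sqrt ((z.re ^ 2 + z.im ^ 2 - 1) ^ 2 + 4 * z.im ^ 2) - (z.re ^ 2 + z.im ^ 2)

/-- `G₊ = √((r²+s²−1)² + 4s²) + (r²+s²)` for `z = r + i·s`. -/
noncomputable def Gplus (z : ℂ) : ℝ :=
  Real.sqrt ((z.re ^ 2 + z.im ^ 2 - 1) ^ 2 + 4 * z.im ^ 2) + (z.re ^ 2 + z.im ^ 2)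

/-- The complex arcsine: `arcsin(r+is) = ½·(sgn r · arccos G₋ + i · sgn s · arcosh G₊)`. -/
noncomputable def carcsin (z : ℂ) : ℂ :=
  (1 / 2 : ℂ) *
    (((Real.sign z.re * Real.arccos (Gminus z) : ℝ) : ℂ) +
      Complex.I * ((Real.sign z.im * arcosh (Gplus z) : ℝ) : ℂ))

/-- The complex arccosine: `arccos z = π/2 − arcsin z`. -/
noncomputable def carccos (z : ℂ) : ℂ := ((Real.pi / 2 : ℝ) : ℂ) - carcsin z

/-- The angle `∠(x,y) = arccos(⟪x|y⟫ / (‖x‖·‖y‖))` in a complex inner product space. -/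
noncomputable def cangleInner {X : Type*} [NormedAddCommGroup X] [InnerProductSpace ℂ X]
    (x y : X) : ℂ :=
  carccos ((inner ℂ x y : ℂ) / ((‖x‖ * ‖y‖ : ℝ) : ℂ))

namespace Real

theorem sign_mul_abs (r : ℝ) : sign r * |r| = r := by
  rcases lt_trichotomy r 0 with h | rfl | h
  · rw [sign_of_neg h, abs_of_neg h]; ring
  · simp
  · rw [sign_of_pos h, abs_of_pos h, one_mul]

theorem sin_sign_mul (r x : ℝ) : sin (sign r * x) = sign r * sin x := by
  rcases sign_apply_eq r with h | h | h <;> simp [h]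

theorem cos_sign_mul {r : ℝ} (hr : r ≠ 0) (x : ℝ) : cos (sign r * x) = cos x := by
  rcases sign_apply_eq_of_ne_zero r hr with h | h <;> simp [h]

theorem sinh_sign_mul (r x : ℝ) : sinh (sign r * x) = sign r * sinh x := by
  rcases sign_apply_eq r with h | h | h <;> simp [h]

theorem cosh_sign_mul {r : ℝ} (hr : r ≠ 0) (x : ℝ) : cosh (sign r * x) = cosh x := by
  rcases sign_apply_eq_of_ne_zero r hr with h | h <;> simp [h]

theorem sin_half_arccos {u : ℝ} (hu₁ : -1 ≤ u) (hu₂ : u ≤ 1) :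
    sin (arccos u / 2) = √((1 - u) / 2) := by
  rw [sin_half_eq_sqrt (arccos_nonneg u) (by linarith [arccos_le_pi u, pi_pos]),
    cos_arccos hu₁ hu₂]

theorem cos_half_arccos {u : ℝ} (hu₁ : -1 ≤ u) (hu₂ : u ≤ 1) :
    cos (arccos u / 2) = √((1 + u) / 2) := by
  rw [cos_half (by linarith [arccos_nonneg u, pi_pos]) (arccos_le_pi u), cos_arccos hu₁ hu₂]

theorem cosh_half_arcosh {t : ℝ} (ht : 1 ≤ t) : cosh (arcosh t / 2) = √((t + 1) / 2) := by
  have h := cosh_two_mul (arcosh t / 2)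
  rw [mul_div_cancel₀ _ two_ne_zero, cosh_arcosh ht, sinh_sq] at h
  rw [show (t + 1) / 2 = cosh (arcosh t / 2) ^ 2 by linarith, sqrt_sq (cosh_pos _).le]

theorem sinh_half_arcosh {t : ℝ} (ht : 1 ≤ t) : sinh (arcosh t / 2) = √((t - 1) / 2) := by
  have h := cosh_two_mul (arcosh t / 2)
  rw [mul_div_cancel₀ _ two_ne_zero, cosh_arcosh ht, cosh_sq] at h
  have hnonneg : 0 ≤ sinh (arcosh t / 2) := sinh_nonneg_iff.2 (by linarith [arcosh_nonneg ht])
  rw [show (t - 1) / 2 = sinh (arcosh t / 2) ^ 2 by linarith, sqrt_sq hnonneg]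

theorem sqrt_half_mul_sqrt_half {a b c : ℝ} (ha : 0 ≤ a) (h : a * b = 4 * c ^ 2) :
    √(a / 2) * √(b / 2) = |c| := by
  rw [← sqrt_mul (by positivity), ← sqrt_sq_eq_abs]
  congr 1
  linarith

end Real

section GminusGplus

variable (z : ℂ)

theorem abs_sub_one_le_sqrt_disc :
    |z.re ^ 2 + z.im ^ 2 - 1| ≤ √((z.re ^ 2 + z.im ^ 2 - 1) ^ 2 + 4 * z.im ^ 2) :=
  Real.abs_le_sqrt (by nlinarith)

theorem sq_sqrt_disc :
    √((z.re ^ 2 + z.im ^ 2 - 1) ^ 2 + 4 * z.im ^ 2) ^ 2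
      = (z.re ^ 2 + z.im ^ 2 - 1) ^ 2 + 4 * z.im ^ 2 :=
  Real.sq_sqrt (by positivity)

theorem Gminus_le_one : Gminus z ≤ 1 := by
  have h : √((z.re ^ 2 + z.im ^ 2 - 1) ^ 2 + 4 * z.im ^ 2) ≤ z.re ^ 2 + z.im ^ 2 + 1 :=
    (Real.sqrt_le_left (by positivity)).2 (by nlinarith)
  rw [Gminus]
  linarith

theorem neg_one_le_Gminus : -1 ≤ Gminus z := by
  have := (abs_le.1 (abs_sub_one_le_sqrt_disc z)).2
  rw [Gminus]
  linarith

theorem one_le_Gplus : 1 ≤ Gplus z := by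
  have := (abs_le.1 (abs_sub_one_le_sqrt_disc z)).1
  rw [Gplus]
  linarith

theorem Gminus_eq_one_of_re_eq_zero (hz : z.re = 0) : Gminus z = 1 := by
  rw [Gminus, hz, show (0 ^ 2 + z.im ^ 2 - 1) ^ 2 + 4 * z.im ^ 2 = (z.im ^ 2 + 1) ^ 2 by ring,
    Real.sqrt_sq (by positivity)]
  ring

theorem Gplus_eq_one_of_im_eq_zero (hz : z.im = 0) (hre : |z.re| ≤ 1) : Gplus z = 1 := by
  have hsq : z.re ^ 2 ≤ 1 := by nlinarith [abs_nonneg z.re, sq_abs z.re]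
  rw [Gplus, hz, show (z.re ^ 2 + 0 ^ 2 - 1) ^ 2 + 4 * 0 ^ 2 = (1 - z.re ^ 2) ^ 2 by ring,
    Real.sqrt_sq (by linarith)]
  ring

theorem one_sub_Gminus_mul_Gplus_add_one : (1 - Gminus z) * (Gplus z + 1) = 4 * z.re ^ 2 := by
  rw [Gminus, Gplus]
  linear_combination -sq_sqrt_disc z

theorem one_add_Gminus_mul_Gplus_sub_one : (1 + Gminus z) * (Gplus z - 1) = 4 * z.im ^ 2 := by
  rw [Gminus, Gplus]
  linear_combination sq_sqrt_disc z

end GminusGplus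

theorem arcosh_eq_real_arcosh : arcosh = Real.arcosh := rfl

theorem sin_carcsin (z : ℂ) (hz : z.im = 0 → |z.re| ≤ 1) : Complex.sin (carcsin z) = z := by
  set a := Real.sign z.re * (Real.arccos (Gminus z) / 2)
  set b := Real.sign z.im * (Real.arcosh (Gplus z) / 2)
  have hcarcsin : carcsin z = a + b * Complex.I := by
    simp only [carcsin, arcosh_eq_real_arcosh, a, b]
    push_cast
    ring
  have hsin : Real.sin a = Real.sign z.re * √((1 - Gminus z) / 2) := by
    rw [Real.sin_sign_mul, Real.sin_half_arccos (neg_one_le_Gminus z) (Gminus_le_one z)]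
  have hcos : Real.cos a = √((1 + Gminus z) / 2) := by
    rcases eq_or_ne z.re 0 with hre | hre
    · norm_num [a, hre, Gminus_eq_one_of_re_eq_zero z hre]
    · rw [Real.cos_sign_mul hre, Real.cos_half_arccos (neg_one_le_Gminus z) (Gminus_le_one z)]
  have hsinh : Real.sinh b = Real.sign z.im * √((Gplus z - 1) / 2) := by
    rw [Real.sinh_sign_mul, Real.sinh_half_arcosh (one_le_Gplus z)]
  have hcosh : Real.cosh b = √((Gplus z + 1) / 2) := by
    rcases eq_or_ne z.im 0 with him | him
    · norm_num [b, him, Gplus_eq_one_of_im_eq_zero z him (hz him)]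
    · rw [Real.cosh_sign_mul him, Real.cosh_half_arcosh (one_le_Gplus z)]
  have hre : Real.sin a * Real.cosh b = z.re := by
    rw [hsin, hcosh, mul_assoc, Real.sqrt_half_mul_sqrt_half (by linarith [Gminus_le_one z])
      (one_sub_Gminus_mul_Gplus_add_one z), Real.sign_mul_abs]
  have him : Real.cos a * Real.sinh b = z.im := by
    rw [hcos, hsinh, mul_left_comm, Real.sqrt_half_mul_sqrt_half
      (by linarith [neg_one_le_Gminus z]) (one_add_Gminus_mul_Gplus_sub_one z), Real.sign_mul_abs]
  apply Complex.ext <;>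
    simp [hcarcsin, Complex.sin_add_mul_I, ← Complex.ofReal_sin, ← Complex.ofReal_cos,
      ← Complex.ofReal_sinh, ← Complex.ofReal_cosh, hre, him]

theorem cos_carccos (z : ℂ) (hz : z.im = 0 → |z.re| ≤ 1) : Complex.cos (carccos z) = z := by
  rw [carccos, Complex.ofReal_div, Complex.ofReal_ofNat, Complex.cos_pi_div_two_sub,
    sin_carcsin z hz]

section InnerProductSpace

variable {X : Type*} [NormedAddCommGroup X] [InnerProductSpace ℂ X]

theorem norm_mul_norm_mul_cos_cangleInner (x y : X) :
    ((‖x‖ * ‖y‖ : ℝ) : ℂ) * Complex.cos (cangleInner x y) = inner ℂ x y := by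
  have hle : ‖inner ℂ x y / ((‖x‖ * ‖y‖ : ℝ) : ℂ)‖ ≤ 1 := by
    rw [norm_div, Complex.norm_real, Real.norm_of_nonneg (by positivity)]
    exact div_le_one_of_le₀ (norm_inner_le_norm x y) (by positivity)
  rw [cangleInner, cos_carccos _ fun _ ↦ (Complex.abs_re_le_norm _).trans hle]
  -- if `‖x‖‖y‖ = 0` then `⟪x|y⟫ = 0` too, so the junk value of the division does no harm
  refine mul_div_cancel_of_imp' fun h ↦ norm_eq_zero.1 (le_antisymm ?_ (norm_nonneg _))
  exact (norm_inner_le_norm x y).trans_eq (Complex.ofReal_eq_zero.1 h)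

theorem ofReal_norm_sub_sq_eq_iff_im_inner_eq_zero (x y : X) :
    ((‖x - y‖ ^ 2 : ℝ) : ℂ) = ((‖x‖ ^ 2 : ℝ) : ℂ) + ((‖y‖ ^ 2 : ℝ) : ℂ) - 2 * inner ℂ x y ↔
      (inner ℂ x y).im = 0 := by
  rw [norm_sub_sq (𝕜 := ℂ), RCLike.re_to_complex, ← Complex.conj_eq_iff_im,
    Complex.conj_eq_iff_re]
  push_cast
  constructor <;> intro h
  · linear_combination (-1 / 2 : ℂ) * h
  · linear_combination (-2 : ℂ) * h

end InnerProductSpace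

theorem stmt19_general {X : Type*} [NormedAddCommGroup X] [InnerProductSpace ℂ X] (x y : X) :
    (((‖x - y‖ ^ 2 : ℝ) : ℂ)
        = ((‖x‖ ^ 2 : ℝ) : ℂ) + ((‖y‖ ^ 2 : ℝ) : ℂ)
          - 2 * ((‖x‖ * ‖y‖ : ℝ) : ℂ) * Complex.cos (cangleInner x y))
      ↔ ((inner ℂ x y : ℂ)).im = 0 := by
  rw [mul_assoc, norm_mul_norm_mul_cos_cangleInner]
  exact ofReal_norm_sub_sq_eq_iff_im_inner_eq_zero x y

/-- in a complex inner product space, for `x, y ≠ 0` the Law of Cosines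
`‖x − y‖² = ‖x‖² + ‖y‖² − 2·‖x‖·‖y‖·cos(∠(x,y))` holds (as an identity of complex numbers)
iff `⟪x|y⟫` is real. -/
theorem stmt19 {X : Type*} [NormedAddCommGroup X] [InnerProductSpace ℂ X] (x y : X)
    (hx : x ≠ 0) (hy : y ≠ 0) :
    (((‖x - y‖ ^ 2 : ℝ) : ℂ)
        = ((‖x‖ ^ 2 : ℝ) : ℂ) + ((‖y‖ ^ 2 : ℝ) : ℂ)
          - 2 * ((‖x‖ * ‖y‖ : ℝ) : ℂ) * Complex.cos (cangleInner x y))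
      ↔ ((inner ℂ x y : ℂ)).im = 0 :=
  stmt19_general x y
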